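/- Let x ∈ [0,1]^d and suppose for some even-sized set V ⊆ {1,…,d} the forbidden-set inequality Σ_{i∈V} xᵢ - Σ_{i∉V} xᵢ ≤ |V| - 1 is violated (strictly). Then for every other even-sized set W ≠ V, the corresponding forbidden-set inequality holds with strict inequality: Σ_{i∈W} xᵢ - Σ_{i∉W} xᵢ < |W| - 1. -/

import Mathlib

open Finset

/-- Squared Euclidean distance on `Fin d → ℝ`. -/
noncomputable def sqdist {d : ℕ} (x y : Fin d → ℝ) : ℝ := ∑ i, (x i - y i) ^ 2

/-- `z` is the Euclidean (nearest-point) projection of `x` onto `S`. -/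
def IsProj {d : ℕ} (S : Set (Fin d → ℝ)) (x z : Fin d → ℝ) : Prop :=
  z ∈ S ∧ ∀ y ∈ S, sqdist x z ≤ sqdist x y

/-- The even parity polytope: convex hull of 0/1 vectors with an even number of ones. -/
noncomputable def PEven (d : ℕ) : Set (Fin d → ℝ) :=
  convexHull ℝ {x | ∃ S : Finset (Fin d), Even S.card ∧ ∀ i, x i = if i ∈ S then 1 else 0}

/-- The odd parity polytope: convex hull of 0/1 vectors with an odd number of ones. -/
noncomputable def POdd (d : ℕ) : Set (Fin d → ℝ) :=
  convexHull ℝ {x | ∃ S : Finset (Fin d), Odd S.card ∧ ∀ i, x i = if i ∈ S then 1 else 0}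

/-!
Write `V` also for the 0/1 vertex of the cube with support `V`. For `x` in the cube, the
forbidden-set inequality of `V` is violated exactly when the `ℓ¹` distance from `x` to `V` is
less than `1`. Two distinct even sets differ in at least two coordinates, so their vertices are at
`ℓ¹` distance at least `2`, and by the triangle inequality `x` is within distance `1` of at most
one of them.
-/

open scoped symmDiff

section

variable {ι : Type*} [DecidableEq ι]

theorem card_symmDiff_add_two_mul_card_inter (V W : Finset ι) :
    (V ∆ W).card + 2 * (V ∩ W).card = V.card + W.card := by
  rw [symmDiff_def, sup_eq_union, card_union_of_disjoint disjoint_sdiff_sdiff]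
  have hV := card_sdiff_add_card_inter V W
  have hW := card_sdiff_add_card_inter W V
  rw [inter_comm] at hW
  omega

theorem two_le_card_symmDiff_of_even {V W : Finset ι} (hV : Even V.card) (hW : Even W.card)
    (hne : V ≠ W) : 2 ≤ (V ∆ W).card := by
  have hpos : 0 < (V ∆ W).card :=
    card_pos.mpr (nonempty_iff_ne_empty.mpr (symmDiff_eq_bot.not.mpr hne))
  have := card_symmDiff_add_two_mul_card_inter V W
  obtain ⟨k, hk⟩ := hV
  obtain ⟨m, hm⟩ := hW
  omega

/-- On the unit cube, `vertexDist V x` is the `ℓ¹` distance from `x` to the 0/1 indicator vector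
of `V`. -/
def vertexDist [Fintype ι] (V : Finset ι) (x : ι → ℝ) : ℝ :=
  ∑ i, if i ∈ V then 1 - x i else x i

theorem vertexDist_eq [Fintype ι] (V : Finset ι) (x : ι → ℝ) :
    vertexDist V x = V.card - (∑ i ∈ V, x i - ∑ i ∈ Vᶜ, x i) := by
  rw [vertexDist, ← sum_add_sum_compl V, sum_congr rfl fun i hi => if_pos hi,
    sum_congr rfl fun i hi => if_neg (mem_compl.mp hi), sum_sub_distrib, sum_const,
    nsmul_one]
  ring

theorem card_symmDiff_le_vertexDist_add [Fintype ι] {x : ι → ℝ} (hx : ∀ i, 0 ≤ x i ∧ x i ≤ 1)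
    (V W : Finset ι) : ((V ∆ W).card : ℝ) ≤ vertexDist V x + vertexDist W x := by
  have hcard : ((V ∆ W).card : ℝ) = ∑ i, if i ∈ V ∆ W then 1 else 0 := by simp
  rw [hcard, vertexDist, vertexDist, ← sum_add_distrib]
  refine sum_le_sum fun i _ => ?_
  obtain ⟨h0, h1⟩ := hx i
  by_cases hV : i ∈ V <;> by_cases hW : i ∈ W <;> simp [mem_symmDiff, hV, hW] <;> linarith

end

theorem at_most_one_even_cut (d : ℕ) (x : Fin d → ℝ)
    (hx : ∀ i, 0 ≤ x i ∧ x i ≤ 1)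
    (V : Finset (Fin d)) (hV : Even V.card)
    (hcut : (V.card : ℝ) - 1 < ∑ i ∈ V, x i - ∑ i ∈ Vᶜ, x i) :
    ∀ W : Finset (Fin d), Even W.card → W ≠ V →
      ∑ i ∈ W, x i - ∑ i ∈ Wᶜ, x i < (W.card : ℝ) - 1 := by
  intro W hW hne
  have hsep : (2 : ℝ) ≤ (V ∆ W).card := mod_cast two_le_card_symmDiff_of_even hV hW hne.symm
  have htri := card_symmDiff_le_vertexDist_add hx V W
  rw [vertexDist_eq, vertexDist_eq] at htri
  linarith
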